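/- Let G be a group, (H, P, ∂) a crossed module, and C(H, P, ∂) the associated strict monoidal groupoid. G-gradings of C(H, P, ∂) (decompositions of the object monoid P into graded pieces compatible with tensor product and isomorphism) are in bijective correspondence with group homomorphisms gr: P → G satisfying Im(∂) ⊆ ker(gr). -/

import Mathlib

/-- A crossed module: groups `H`, `P`, an action of `P` on `H` by group automorphisms,
and an equivariant homomorphism `∂ : H →* P` satisfying the Peiffer identity. -/
structure CrossedModule (H P : Type*) [Group H] [Group P] [MulDistribMulAction P H] where
  d : H →* P
  equivariant : ∀ (p : P) (h : H), d (p • h) = p * d h * p⁻¹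
  peiffer : ∀ h₁ h₂ : H, (d h₁) • h₂ = h₁ * h₂ * h₁⁻¹

variable {H P : Type*} [Group H] [Group P] [MulDistribMulAction P H]

/-- Morphisms `g → g'` of the monoidal groupoid `C(H,P,∂)`: pairs `(h,g)` with `∂(h)g = g'`. -/
def CMHom (cm : CrossedModule H P) (g g' : P) : Type _ := {h : H // cm.d h * g = g'}

def CMid (cm : CrossedModule H P) (g : P) : CMHom cm g g := ⟨1, by simp⟩

def CMcomp {cm : CrossedModule H P} {g g' g'' : P}
    (u : CMHom cm g g') (v : CMHom cm g' g'') : CMHom cm g g'' :=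
  ⟨v.1 * u.1, by rw [map_mul, mul_assoc, u.2, v.2]⟩

def CMtensor {cm : CrossedModule H P} {a a' b b' : P}
    (u : CMHom cm a a') (v : CMHom cm b b') : CMHom cm (a * b) (a' * b') :=
  ⟨u.1 * (a • v.1), by
    have key : cm.d u.1 * (a * cm.d v.1 * a⁻¹) * (a * b) = (cm.d u.1 * a) * (cm.d v.1 * b) := by
      group
    rw [map_mul, cm.equivariant, key, u.2, v.2]⟩

def CMcast {cm : CrossedModule H P} {a b a' b' : P} (ha : a = a') (hb : b = b')
    (u : CMHom cm a b) : CMHom cm a' b' := ha ▸ hb ▸ u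

def CMHom.ofD (cm : CrossedModule H P) (h : H) : CMHom cm 1 (cm.d h) := ⟨h, mul_one _⟩

theorem CMHom.map_eq_of_map_d_eq_one {M : Type*} [MulOneClass M] {cm : CrossedModule H P}
    (f : P →* M) (hf : ∀ h : H, f (cm.d h) = 1) {a b : P} (u : CMHom cm a b) : f a = f b := by
  rw [← u.2, map_mul, hf, one_mul]

theorem CrossedModule.apply_d_eq_one_of_iso_invariant {α : Type*} [One α] (cm : CrossedModule H P)
    {dg : P → α} (hdg : dg 1 = 1) (hiso : ∀ a b : P, Nonempty (CMHom cm a b) → dg a = dg b)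
    (h : H) : dg (cm.d h) = 1 :=
  (hiso 1 (cm.d h) ⟨CMHom.ofD cm h⟩).symm.trans hdg

/-- `G`-gradings of the monoidal groupoid `C(H,P,∂)` (degree functions on objects that are
multiplicative, unital, and constant on isomorphism classes) are in bijective correspondence
with group homomorphisms `gr : P → G` with `Im ∂ ⊆ ker gr`. -/
theorem stmt14 (G : Type*) [Group G] (cm : CrossedModule H P) :
    ∃ e : {gr : P →* G // ∀ h : H, gr (cm.d h) = 1} ≃
        {dg : P → G // dg 1 = 1 ∧ (∀ a b : P, dg (a * b) = dg a * dg b) ∧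
          ∀ a b : P, Nonempty (CMHom cm a b) → dg a = dg b},
      ∀ gr, ((e gr : {dg : P → G // _}) : P → G) = (gr : {gr : P →* G // _}).1 := by
  refine ⟨{ toFun := fun gr => ⟨gr.1, map_one _, map_mul _,
                fun _ _ ⟨u⟩ => u.map_eq_of_map_d_eq_one gr.1 gr.2⟩
            invFun := fun dg => ⟨MonoidHom.mk' dg.1 dg.2.2.1,
                cm.apply_d_eq_one_of_iso_invariant dg.2.1 dg.2.2.2⟩
            left_inv := fun _ => rfl
            right_inv := fun _ => rfl }, fun _ => rfl⟩
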